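/- The graph consisting of two triangles glued together at a single vertex (the bowtie graph on 5 vertices: triangles v_1v_2v_3 and v_3v_4v_5 sharing only the vertex v_3) is not 0-1 strongly EFX-orientable, and hence not strongly EFX-orientable. -/

import Mathlib

open SimpleGraph
open scoped Classical

variable {V : Type*}

def bundleSet (G : SimpleGraph V) (head : Sym2 V → V) (v : V) : Set (Sym2 V) :=
  {e ∈ G.edgeSet | head e = v}

def IsEFXOrientation (G : SimpleGraph V) (f : V → Set (Sym2 V) → NNReal)
    (head : Sym2 V → V) : Prop :=
  (∀ e ∈ G.edgeSet, head e ∈ e) ∧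
  ∀ a b : V, ∀ g ∈ bundleSet G head b,
    f a (bundleSet G head b \ {g}) ≤ f a (bundleSet G head a)

def StronglyEFXOrientable [Fintype V] (G : SimpleGraph V) : Prop :=
  ∀ f : V → Set (Sym2 V) → NNReal,
    (∀ a, Monotone (f a)) →
    (∀ a X, f a X = f a (X ∩ G.incidenceSet a)) →
    ∃ head : Sym2 V → V, IsEFXOrientation G f head

noncomputable def bundle [Fintype V] (G : SimpleGraph V) (head : Sym2 V → V) (v : V) :
    Finset (Sym2 V) :=
  Finset.univ.filter fun e => e ∈ G.edgeSet ∧ head e = v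

def IsEFX01Orientation [Fintype V] (G : SimpleGraph V) (w : V → Sym2 V → ℕ)
    (head : Sym2 V → V) : Prop :=
  (∀ e ∈ G.edgeSet, head e ∈ e) ∧
  ∀ a b : V, ∀ g ∈ bundle G head b,
    ∑ e ∈ (bundle G head b).erase g, w a e ≤ ∑ e ∈ bundle G head a, w a e

def ZeroOneStronglyEFXOrientable [Fintype V] (G : SimpleGraph V) : Prop :=
  ∀ w : V → Sym2 V → ℕ, (∀ a e, w a e ≤ 1) → (∀ a e, a ∉ e → w a e = 0) →
    ∃ head : Sym2 V → V, IsEFX01Orientation G w head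

def IndepOn (G : SimpleGraph V) (s : Set V) : Prop :=
  ∀ a ∈ s, ∀ b ∈ s, ¬ G.Adj a b

/-- The bowtie graph: two triangles `v₀v₁v₂` and `v₂v₃v₄` glued at the single vertex `v₂`. -/
def bowtie : SimpleGraph (Fin 5) :=
  SimpleGraph.fromEdgeSet
    {s(0, 1), s(0, 2), s(1, 2), s(2, 3), s(2, 4), s(3, 4)}

/-
Let agents `0` and `1` want only `s(0,1)`, agent `3` only `s(2,3)`, agent `4` only `s(2,4)`, and
the centre `2` want exactly the spokes `s(2,3)` and `s(2,4)`. An agent whose own bundle is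
worthless to it tolerates no second edge next to a wanted one in any other bundle. Whoever of
`0`, `1` loses `s(0,1)` is such an agent, so the winner holds nothing else and the other left
spoke goes to `2`. Then `3` and `4` must each keep their spoke, so `2` values its bundle at `0`,
yet `s(3,4)` lands beside one of those spokes. A 0-1 valuation is a special monotone valuation
that only looks at incident edges, so the general notion fails as well.
-/

section EFX01

variable {V : Type*} [Fintype V] {G : SimpleGraph V} {head : Sym2 V → V}

theorem mem_bundle {v : V} {e : Sym2 V} :
    e ∈ bundle G head v ↔ e ∈ G.edgeSet ∧ head e = v := by
  simp [bundle]

theorem coe_bundle (v : V) : (bundle G head v : Set (Sym2 V)) = bundleSet G head v := by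
  ext e
  simp [mem_bundle, bundleSet]

theorem IsEFX01Orientation.eq_of_mem_bundle {w : V → Sym2 V → ℕ}
    (h : IsEFX01Orientation G w head) {a b : V} {e g : Sym2 V}
    (hzero : ∑ x ∈ bundle G head a, w a x = 0) (he : e ∈ bundle G head b) (hwe : w a e ≠ 0)
    (hg : g ∈ bundle G head b) : g = e := by
  by_contra hne
  have hle := h.2 a b g hg
  rw [hzero, Nat.le_zero, Finset.sum_eq_zero_iff] at hle
  exact hwe (hle e (Finset.mem_erase.2 ⟨Ne.symm hne, he⟩))

theorem IsEFX01Orientation.head_eq_or_eq {w : V → Sym2 V → ℕ}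
    (h : IsEFX01Orientation G w head) {x y : V} (hxy : G.Adj x y) :
    head s(x, y) = x ∨ head s(x, y) = y :=
  Sym2.mem_iff.1 (h.1 _ hxy)

noncomputable def weightSetFunction (G : SimpleGraph V) (w : V → Sym2 V → ℕ) (a : V)
    (X : Set (Sym2 V)) : NNReal :=
  ((∑ e ∈ Finset.univ.filter (· ∈ X ∩ G.incidenceSet a), w a e : ℕ) : NNReal)

theorem weightSetFunction_monotone (w : V → Sym2 V → ℕ) (a : V) :
    Monotone (weightSetFunction G w a) := by
  intro X Y hXY
  unfold weightSetFunction
  gcongr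

theorem weightSetFunction_inter_incidenceSet (w : V → Sym2 V → ℕ) (a : V)
    (X : Set (Sym2 V)) :
    weightSetFunction G w a X = weightSetFunction G w a (X ∩ G.incidenceSet a) := by
  simp only [weightSetFunction, Set.inter_assoc, Set.inter_self]

theorem weightSetFunction_coe {w : V → Sym2 V → ℕ} (hw : ∀ a e, a ∉ e → w a e = 0) (a : V)
    {X : Finset (Sym2 V)} (hX : ↑X ⊆ G.edgeSet) :
    weightSetFunction G w a X = ((∑ e ∈ X, w a e : ℕ) : NNReal) := by
  unfold weightSetFunction
  congr 1
  apply Finset.sum_subset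
  · intro e he
    simp only [Finset.mem_filter, Finset.mem_univ, true_and] at he
    exact he.1
  · intro e heX he
    exact hw a e fun hae => he (by simpa using ⟨heX, hX heX, hae⟩)

theorem StronglyEFXOrientable.zeroOneStronglyEFXOrientable (hG : StronglyEFXOrientable G) :
    ZeroOneStronglyEFXOrientable G := by
  intro w _ hw
  obtain ⟨head, hmem, hefx⟩ := hG (weightSetFunction G w) (weightSetFunction_monotone w)
    (weightSetFunction_inter_incidenceSet w)
  have hsub (v : V) : ↑(bundle G head v) ⊆ G.edgeSet := fun e he => (mem_bundle.1 he).1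
  refine ⟨head, hmem, fun a b g hg => ?_⟩
  have key := hefx a b g (by rw [← coe_bundle]; exact hg)
  rw [← coe_bundle, ← coe_bundle, ← Finset.coe_singleton, ← Finset.coe_sdiff,
    Finset.sdiff_singleton_eq_erase, weightSetFunction_coe hw a (hsub a),
    weightSetFunction_coe hw a ((Finset.coe_subset.2 (Finset.erase_subset g _)).trans (hsub b))]
    at key
  exact_mod_cast key

end EFX01

section Bowtie

def bowtieWanted : Fin 5 → Finset (Sym2 (Fin 5))
  | 0 | 1 => {s(0, 1)}
  | 2 => {s(2, 3), s(2, 4)}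
  | 3 => {s(2, 3)}
  | 4 => {s(2, 4)}

def bowtieValuation (a : Fin 5) (e : Sym2 (Fin 5)) : ℕ :=
  if e ∈ bowtieWanted a then 1 else 0

theorem bowtieValuation_le_one (a : Fin 5) (e : Sym2 (Fin 5)) : bowtieValuation a e ≤ 1 := by
  unfold bowtieValuation
  split_ifs <;> simp

theorem mem_of_mem_bowtieWanted {a : Fin 5} {e : Sym2 (Fin 5)} (he : e ∈ bowtieWanted a) :
    a ∈ e := by
  revert a e
  decide

theorem bowtieValuation_eq_zero (a : Fin 5) (e : Sym2 (Fin 5)) (hae : a ∉ e) :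
    bowtieValuation a e = 0 :=
  if_neg fun he => hae (mem_of_mem_bowtieWanted he)

variable {head : Sym2 (Fin 5) → Fin 5} (h : IsEFX01Orientation bowtie bowtieValuation head)
include h

theorem IsEFX01Orientation.bowtie_eq_of_head_eq {a : Fin 5} {e g : Sym2 (Fin 5)}
    (hneglected : ∀ x ∈ bowtieWanted a, head x ≠ a) (he : e ∈ bowtieWanted a)
    (heE : e ∈ bowtie.edgeSet) (hgE : g ∈ bowtie.edgeSet) (hhead : head e = head g) :
    g = e := by
  refine h.eq_of_mem_bundle (a := a) ?_ (mem_bundle.2 ⟨heE, hhead⟩) (by simp [bowtieValuation, he])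
    (mem_bundle.2 ⟨hgE, rfl⟩)
  refine Finset.sum_eq_zero fun x hx => if_neg fun hxa => hneglected x hxa ?_
  exact (mem_bundle.1 hx).2

theorem IsEFX01Orientation.bowtie_eq_of_head_eq_of_wanted_eq_singleton {a : Fin 5}
    {e x : Sym2 (Fin 5)} (hwanted : bowtieWanted a = {x}) (hlost : head x ≠ a)
    (hxE : x ∈ bowtie.edgeSet) (heE : e ∈ bowtie.edgeSet) (hhead : head e = head x) : e = x :=
  h.bowtie_eq_of_head_eq (a := a) (by simpa [hwanted]) (by simp [hwanted]) hxE heE hhead.symm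

theorem IsEFX01Orientation.bowtie_left_spoke : head s(0, 2) = 2 ∨ head s(1, 2) = 2 := by
  rcases h.head_eq_or_eq (x := 0) (y := 1) (by simp [bowtie]) with h01 | h01
  · left
    refine (h.head_eq_or_eq (x := 0) (y := 2) (by simp [bowtie])).resolve_left fun h02 => ?_
    have := h.bowtie_eq_of_head_eq_of_wanted_eq_singleton (a := 1) rfl (by simp [h01])
      (by simp [bowtie]) (by simp [bowtie]) (h02.trans h01.symm)
    simp at this
  · right
    refine (h.head_eq_or_eq (x := 1) (y := 2) (by simp [bowtie])).resolve_left fun h12 => ?_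
    have := h.bowtie_eq_of_head_eq_of_wanted_eq_singleton (a := 0) rfl (by simp [h01])
      (by simp [bowtie]) (by simp [bowtie]) (h12.trans h01.symm)
    simp at this

theorem IsEFX01Orientation.bowtie_right_spoke {k : Fin 5} (hk : bowtieWanted k = {s(2, k)})
    (h2k : bowtie.Adj 2 k) {e : Sym2 (Fin 5)} (heE : e ∈ bowtie.edgeSet) (he : head e = 2)
    (hne : e ≠ s(2, k)) : head s(2, k) = k :=
  (h.head_eq_or_eq h2k).resolve_left fun h2 =>
    hne (h.bowtie_eq_of_head_eq_of_wanted_eq_singleton hk (h2.trans_ne h2k.ne) h2k heE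
      (he.trans h2.symm))

theorem IsEFX01Orientation.bowtie_false_of_right_spokes (h3 : head s(2, 3) = 3)
    (h4 : head s(2, 4) = 4) : False := by
  have hneglected : ∀ x ∈ bowtieWanted 2, head x ≠ 2 := by simp [bowtieWanted, h3, h4]
  rcases h.head_eq_or_eq (x := 3) (y := 4) (by simp [bowtie]) with h34 | h34
  · have := h.bowtie_eq_of_head_eq hneglected (by simp [bowtieWanted]) (by simp [bowtie])
      (by simp [bowtie]) (h3.trans h34.symm)
    simp at this
  · have := h.bowtie_eq_of_head_eq hneglected (by simp [bowtieWanted]) (by simp [bowtie])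
      (by simp [bowtie]) (h4.trans h34.symm)
    simp at this

end Bowtie

theorem not_isEFX01Orientation_bowtieValuation (head : Sym2 (Fin 5) → Fin 5) :
    ¬ IsEFX01Orientation bowtie bowtieValuation head := by
  intro h
  obtain ⟨e, heE, he, hne3, hne4⟩ :
      ∃ e ∈ bowtie.edgeSet, head e = 2 ∧ e ≠ s(2, 3) ∧ e ≠ s(2, 4) := by
    rcases h.bowtie_left_spoke with he | he
    · exact ⟨_, by simp [bowtie], he, by simp, by simp⟩
    · exact ⟨_, by simp [bowtie], he, by simp, by simp⟩
  exact h.bowtie_false_of_right_spokes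
    (h.bowtie_right_spoke rfl (by simp [bowtie]) heE he hne3)
    (h.bowtie_right_spoke rfl (by simp [bowtie]) heE he hne4)

/-- The bowtie graph (two triangles glued at a vertex) is not 0-1 strongly
EFX-orientable, and hence not strongly EFX-orientable. -/
theorem bowtie_not_stronglyEFXOrientable :
    ¬ ZeroOneStronglyEFXOrientable bowtie ∧ ¬ StronglyEFXOrientable bowtie := by
  have hZeroOne : ¬ ZeroOneStronglyEFXOrientable bowtie := fun hG => by
    obtain ⟨head, h⟩ := hG bowtieValuation bowtieValuation_le_one bowtieValuation_eq_zero
    exact not_isEFX01Orientation_bowtieValuation head h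
  exact ⟨hZeroOne, fun hG => hZeroOne hG.zeroOneStronglyEFXOrientable⟩
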